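/- Let a = {a_n} be a positive non-increasing summable sequence, C_a its decreasing Cantor set, θ ∈ (0,1], and s' > 0 such that for some k', s' < (−ρ(k') log 2)/(log s_{ρ(k')}) where ρ minimizes s_m^{1/m} over m ∈ [k', γ(k')+1] with γ(k') = max{m : s_m ≥ s_{k'}^{1/θ}}. Then every finite cover {U_i} of C_a with s_{k'}^{1/θ} ≤ |U_i| ≤ s_{k'} satisfies ∑_i |U_i|^{s'} ≥ 1/16. -/

import Mathlib

open Filter Set Topology

/-- Number of closed balls of radius `δ` needed to cover `F`. -/
noncomputable def coverNum (F : Set ℝ) (δ : ℝ) : ℕ :=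
  sInf {n : ℕ | ∃ S : Finset ℝ, S.card = n ∧ F ⊆ ⋃ x ∈ S, Metric.closedBall x δ}

/-- Upper box-counting dimension. -/
noncomputable def upperBoxDim (F : Set ℝ) : ℝ :=
  limsup (fun δ : ℝ => Real.log (coverNum F δ) / -Real.log δ) (nhdsWithin 0 (Set.Ioi 0))

/-- Lower box-counting dimension. -/
noncomputable def lowerBoxDim (F : Set ℝ) : ℝ :=
  liminf (fun δ : ℝ => Real.log (coverNum F δ) / -Real.log δ) (nhdsWithin 0 (Set.Ioi 0))

/-- Assouad dimension. -/
noncomputable def assouadDim (E : Set ℝ) : ℝ :=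
  sInf {α : ℝ | ∃ c > (0:ℝ), ∃ ρ > (0:ℝ), ∀ x ∈ E, ∀ r R : ℝ, 0 < r → r < R → R < ρ →
    (coverNum (Metric.ball x R ∩ E) r : ℝ) ≤ c * (R / r) ^ α}

/-- Lower (Assouad) dimension. -/
noncomputable def lowerAssouadDim (E : Set ℝ) : ℝ :=
  sSup {α : ℝ | ∃ c > (0:ℝ), ∃ ρ > (0:ℝ), ∀ x ∈ E, ∀ r R : ℝ, 0 < r → r < R → R < ρ →
    c * (R / r) ^ α ≤ (coverNum (Metric.ball x R ∩ E) r : ℝ)}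

/-- Upper θ-intermediate dimension (with the convention that at θ = 0 it is the
Hausdorff dimension). -/
noncomputable def upperIntDim (θ : ℝ) (F : Set ℝ) : ℝ :=
  if θ = 0 then (dimH F).toReal else
  sInf {s : ℝ | 0 ≤ s ∧ ∀ ε > (0:ℝ), ∃ δ₀ > (0:ℝ), ∀ δ : ℝ, 0 < δ → δ ≤ δ₀ →
    ∃ (I : Finset ℕ) (U : ℕ → Set ℝ), (F ⊆ ⋃ i ∈ I, U i) ∧
      (∀ i ∈ I, δ ^ (1 / θ) ≤ Metric.diam (U i) ∧ Metric.diam (U i) ≤ δ) ∧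
      ∑ i ∈ I, Metric.diam (U i) ^ s ≤ ε}

/-- Lower θ-intermediate dimension (with the convention that at θ = 0 it is the
Hausdorff dimension). -/
noncomputable def lowerIntDim (θ : ℝ) (F : Set ℝ) : ℝ :=
  if θ = 0 then (dimH F).toReal else
  sInf {s : ℝ | 0 ≤ s ∧ ∀ ε > (0:ℝ), ∀ δ₀ > (0:ℝ), ∃ δ : ℝ, 0 < δ ∧ δ ≤ δ₀ ∧
    ∃ (I : Finset ℕ) (U : ℕ → Set ℝ), (F ⊆ ⋃ i ∈ I, U i) ∧
      (∀ i ∈ I, δ ^ (1 / θ) ≤ Metric.diam (U i) ∧ Metric.diam (U i) ≤ δ) ∧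
      ∑ i ∈ I, Metric.diam (U i) ^ s ≤ ε}

/-- tails `x_n = ∑_{i=n}^∞ a_i` (the sequence `a` is indexed from 1;
the value `a 0` is irrelevant). -/
noncomputable def xseq (a : ℕ → ℝ) (n : ℕ) : ℝ := ∑' i : ℕ, a (n + i)

/-- `s_n = 2^{-n} x_{2^n}`. -/
noncomputable def sseq (a : ℕ → ℝ) (n : ℕ) : ℝ := xseq a (2 ^ n) / 2 ^ n

/-- `r_n = 2^{-n} ∑_{i=2^n}^{2^{n+1}-1} a_i`. -/
noncomputable def rseq (a : ℕ → ℝ) (n : ℕ) : ℝ :=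
  (∑ i ∈ Finset.range (2 ^ n), a (2 ^ n + i)) / 2 ^ n

/-- The countable complementary set `D_a = {x_k : k ≥ 1} ∪ {0}`. -/
noncomputable def Da (a : ℕ → ℝ) : Set ℝ := {0} ∪ {y : ℝ | ∃ k ≥ 1, y = xseq a k}

/-- Length of the interval corresponding to node `m` (in binary-tree indexing, root `1`)
in the construction of the decreasing Cantor set: the sum of the gaps in the subtree of `m`. -/
noncomputable def clen (a : ℕ → ℝ) (m : ℕ) : ℝ :=
  ∑' k : ℕ, ∑ i ∈ Finset.range (2 ^ k), a (2 ^ k * m + i)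

/-- Left endpoint of the interval corresponding to node `m`. -/
noncomputable def lft (a : ℕ → ℝ) : ℕ → ℝ
  | 0 => 0
  | 1 => 0
  | n + 2 =>
    if (n + 2) % 2 = 0 then lft a ((n + 2) / 2)
    else lft a ((n + 2) / 2) + clen a (n + 1) + a ((n + 2) / 2)
termination_by n => n
decreasing_by all_goals omega

/-- The closed interval corresponding to node `m`:  node `2^n + j - 1` is the
interval `I_{n,j}` of step `n`, for `1 ≤ j ≤ 2^n`. -/
noncomputable def node (a : ℕ → ℝ) (m : ℕ) : Set ℝ := Set.Icc (lft a m) (lft a m + clen a m)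

/-- The decreasing Cantor set `C_a` associated with the sequence `a`. -/
noncomputable def cantorSetOf (a : ℕ → ℝ) : Set ℝ :=
  ⋂ n : ℕ, ⋃ j ∈ Finset.Icc 1 (2 ^ n), node a (2 ^ n + j - 1)

/-- `E` is a complementary set of the sequence `a`: a closed subset of `[0,1]`
whose complement in `[0,1]` is a disjoint union of open intervals of lengths `a_1, a_2, …`. -/
def IsComplSet (a : ℕ → ℝ) (E : Set ℝ) : Prop :=
  ∃ g : ℕ → ℝ,
    (∀ n ≥ 1, Set.Ioo (g n) (g n + a n) ⊆ Set.Icc 0 1) ∧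
    (∀ m ≥ 1, ∀ n ≥ 1, m ≠ n →
      Disjoint (Set.Ioo (g m) (g m + a m)) (Set.Ioo (g n) (g n + a n))) ∧
    E = Set.Icc 0 1 \ ⋃ n ∈ {k : ℕ | 1 ≤ k}, Set.Ioo (g n) (g n + a n)

/-- `γ_{θ,a}(r) = max{ m : s_m ≥ s_r^{1/θ} }`. -/
noncomputable def gammaIdx (a : ℕ → ℝ) (θ : ℝ) (r : ℕ) : ℕ :=
  sSup {m : ℕ | sseq a r ^ (1 / θ) ≤ sseq a m}

/-!
Index the intervals of the construction by the nodes of a binary tree, the level-`n` intervals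
being the nodes `2^n ≤ m < 2^(n+1)` from left to right. Every level-`n` interval is at least
`s_(n+1)` long, so a set of diameter at most `s_(n+1)` meets at most two of them, and hence at
most `2 * 2^d` intervals of level `n + d`. Since `s_(γ(k')+1) < s_(k')^(1/θ)`, each `U_i` has a
level `t_i ∈ [k', γ(k')]` with `s_(t_i + 1) ≤ |U_i| ≤ s_(t_i)`. The bound on `s'` together with
the minimality of `ρ(k')` gives `s_m ^ s' > 2^(-m)` for `m ∈ [k', γ(k') + 1]`, so
`|U_i| ^ s' ≥ 2^(-t_i - 1)`. As each of the `2^T` level-`T` intervals contains a point of `C_a`,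
counting them gives `∑ 2^(-t_i) ≥ 1/4`.
-/

section Tails

variable {a : ℕ → ℝ}

lemma summable_add_left (hsumm : Summable fun n => a (n + 1)) {n : ℕ} (hn : 1 ≤ n) :
    Summable fun i => a (n + i) := by
  refine ((summable_nat_add_iff (n - 1)).2 hsumm).congr fun i => ?_
  congr 1
  omega

lemma xseq_pos (hpos : ∀ n ≥ 1, 0 < a n) (hsumm : Summable fun n => a (n + 1)) {n : ℕ}
    (hn : 1 ≤ n) : 0 < xseq a n :=
  (summable_add_left hsumm hn).tsum_pos (fun i => (hpos _ (by omega)).le) 0 (hpos _ (by omega))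

lemma sum_Ico_le_xseq (hpos : ∀ n ≥ 1, 0 < a n) (hsumm : Summable fun n => a (n + 1)) {m : ℕ}
    (hm : 1 ≤ m) (n : ℕ) : ∑ j ∈ Finset.Ico m n, a j ≤ xseq a m := by
  rw [Finset.sum_Ico_eq_sum_range]
  exact (summable_add_left hsumm hm).sum_le_tsum _ fun i _ => (hpos _ (by omega)).le

lemma sseq_pos (hpos : ∀ n ≥ 1, 0 < a n) (hsumm : Summable fun n => a (n + 1)) (n : ℕ) :
    0 < sseq a n :=
  div_pos (xseq_pos hpos hsumm Nat.one_le_two_pow) (by positivity)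

lemma tendsto_sseq_atTop : Tendsto (sseq a) atTop (𝓝 0) := by
  have hx : Tendsto (xseq a) atTop (𝓝 0) := by
    refine (tendsto_sum_nat_add a).congr fun n => ?_
    simp only [xseq, add_comm]
  exact (hx.comp (tendsto_pow_atTop_atTop_of_one_lt one_lt_two)).div_atTop
    (tendsto_pow_atTop_atTop_of_one_lt one_lt_two)

lemma bddAbove_setOf_le_sseq {c : ℝ} (hc : 0 < c) : BddAbove {m | c ≤ sseq a m} := by
  have h : ∀ᶠ m in cofinite, sseq a m < c :=
    Nat.cofinite_eq_atTop ▸ tendsto_sseq_atTop.eventually (gt_mem_nhds hc)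
  exact ((eventually_cofinite.1 h).subset fun m hm => not_lt.2 hm).bddAbove

lemma le_gammaIdx (hpos : ∀ n ≥ 1, 0 < a n) (hsumm : Summable fun n => a (n + 1)) {θ : ℝ}
    {r m : ℕ} (hm : sseq a r ^ (1 / θ) ≤ sseq a m) : m ≤ gammaIdx a θ r :=
  le_csSup (bddAbove_setOf_le_sseq (Real.rpow_pos_of_pos (sseq_pos hpos hsumm r) _)) hm

lemma sseq_gammaIdx_succ_lt (hpos : ∀ n ≥ 1, 0 < a n) (hsumm : Summable fun n => a (n + 1))
    (θ : ℝ) (r : ℕ) : sseq a (gammaIdx a θ r + 1) < sseq a r ^ (1 / θ) := by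
  by_contra h
  have := le_gammaIdx hpos hsumm (not_lt.1 h)
  omega

end Tails

lemma exists_le_and_succ_le {s : ℕ → ℝ} {d : ℝ} {k g : ℕ} (hkg : k ≤ g) (hk : d ≤ s k)
    (hg : s (g + 1) ≤ d) : ∃ t, k ≤ t ∧ t ≤ g ∧ d ≤ s t ∧ s (t + 1) ≤ d := by
  induction g, hkg using Nat.le_induction with
  | base => exact ⟨k, le_rfl, le_rfl, hk, hg⟩
  | succ g hkg ih =>
    by_cases hd : d ≤ s (g + 1)
    · exact ⟨g + 1, by omega, le_rfl, hd, hg⟩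
    · obtain ⟨t, hkt, htg, ht⟩ := ih (not_le.1 hd).le
      exact ⟨t, hkt, by omega, ht⟩

/-- With `x = s_ρ` and `y = s_m`, this is `s_m ^ s' > 2 ^ (-m)`. -/
lemma half_pow_lt_rpow {x y s : ℝ} {ρ m : ℕ} (hx : 0 < x) (hy : 0 < y) (hm : m ≠ 0) (hs : 0 < s)
    (hlt : s < -ρ * Real.log 2 / Real.log x) (hxy : x ^ (1 / (ρ : ℝ)) ≤ y ^ (1 / (m : ℝ))) :
    (1 / 2 : ℝ) ^ m < y ^ s := by
  have hlog2 : 0 < Real.log 2 := Real.log_pos one_lt_two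
  have hlogx : Real.log x < 0 := by
    by_contra h
    exact (hs.trans hlt).not_ge (div_nonpos_of_nonpos_of_nonneg
      (by nlinarith [(Nat.cast_nonneg ρ : (0 : ℝ) ≤ ρ)]) (not_lt.1 h))
  have hsx : -ρ * Real.log 2 < s * Real.log x := (lt_div_iff_of_neg hlogx).1 hlt
  have hρ : (0 : ℝ) < ρ := by
    by_contra h
    have : (ρ : ℝ) = 0 := le_antisymm (not_lt.1 h) ρ.cast_nonneg
    nlinarith
  have hm' : (0 : ℝ) < m := Nat.cast_pos.2 (Nat.pos_of_ne_zero hm)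
  have hlog : Real.log x / ρ ≤ Real.log y / m := by
    have := Real.log_le_log (Real.rpow_pos_of_pos hx _) hxy
    rwa [Real.log_rpow hx, Real.log_rpow hy, one_div_mul_eq_div, one_div_mul_eq_div] at this
  have key : -(m * Real.log 2) < s * Real.log y := by
    rw [div_le_div_iff₀ hρ hm'] at hlog
    nlinarith
  rw [← Real.log_lt_log_iff (by positivity) (Real.rpow_pos_of_pos hy s), Real.log_rpow hy,
    Real.log_pow, one_div, Real.log_inv]
  linarith

section IntervalLength

variable {a : ℕ → ℝ}

lemma clen_summand_nonneg (hpos : ∀ n ≥ 1, 0 < a n) {m : ℕ} (hm : 1 ≤ m) (k : ℕ) :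
    0 ≤ ∑ i ∈ Finset.range (2 ^ k), a (2 ^ k * m + i) :=
  Finset.sum_nonneg fun _ _ =>
    (hpos _ (le_add_right (Nat.one_le_iff_ne_zero.2 (by positivity)))).le

/-- The `k`-th summand of `clen a m` is a sum over `[2^k m, 2^k (m + 1))`; these ranges sit
inside the consecutive blocks `[2^k m, 2^(k+1) m)`, which tile `[m, ∞)`. -/
lemma clen_summable (hpos : ∀ n ≥ 1, 0 < a n) (hsumm : Summable fun n => a (n + 1)) {m : ℕ}
    (hm : 1 ≤ m) : Summable fun k => ∑ i ∈ Finset.range (2 ^ k), a (2 ^ k * m + i) := by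
  have hblock : ∀ k, ∑ i ∈ Finset.range (2 ^ k), a (2 ^ k * m + i) ≤
      ∑ j ∈ Finset.Ico (2 ^ k * m) (2 ^ (k + 1) * m), a j := by
    intro k
    rw [Finset.sum_Ico_eq_sum_range]
    refine Finset.sum_le_sum_of_subset_of_nonneg (Finset.range_subset_range.2 ?_)
      fun i _ _ => (hpos _ (le_add_right (Nat.one_le_iff_ne_zero.2 (by positivity)))).le
    rw [pow_succ, mul_assoc, two_mul, mul_add, Nat.add_sub_cancel]
    exact Nat.le_mul_of_pos_right _ hm
  have htile : ∀ K, ∑ k ∈ Finset.range K, ∑ j ∈ Finset.Ico (2 ^ k * m) (2 ^ (k + 1) * m), a j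
      = ∑ j ∈ Finset.Ico m (2 ^ K * m), a j := by
    intro K
    induction K with
    | zero => simp
    | succ K ih =>
      rw [Finset.sum_range_succ, ih, Finset.sum_Ico_consecutive _
        (Nat.le_mul_of_pos_left m (by positivity)) (by gcongr <;> omega)]
  refine summable_of_sum_range_le (c := xseq a m) (clen_summand_nonneg hpos hm) fun K => ?_
  exact (Finset.sum_le_sum fun k _ => hblock k).trans
    (htile K ▸ sum_Ico_le_xseq hpos hsumm hm _)

lemma clen_nonneg (hpos : ∀ n ≥ 1, 0 < a n) {m : ℕ} (hm : 1 ≤ m) : 0 ≤ clen a m :=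
  tsum_nonneg (clen_summand_nonneg hpos hm)

lemma clen_eq_add (hpos : ∀ n ≥ 1, 0 < a n) (hsumm : Summable fun n => a (n + 1)) {m : ℕ}
    (hm : 1 ≤ m) : clen a m = a m + clen a (2 * m) + clen a (2 * m + 1) := by
  have hsplit : ∀ k, ∑ i ∈ Finset.range (2 ^ (k + 1)), a (2 ^ (k + 1) * m + i)
      = ∑ i ∈ Finset.range (2 ^ k), a (2 ^ k * (2 * m) + i)
        + ∑ i ∈ Finset.range (2 ^ k), a (2 ^ k * (2 * m + 1) + i) := by
    intro k
    rw [pow_succ, mul_two, Finset.sum_range_add]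
    congr 1 <;> refine Finset.sum_congr rfl fun i _ => ?_ <;> ring_nf
  rw [clen, (clen_summable hpos hsumm hm).tsum_eq_zero_add, tsum_congr hsplit,
    (clen_summable hpos hsumm (by omega)).tsum_add (clen_summable hpos hsumm (by omega))]
  simp [clen, add_assoc]

lemma sum_Ico_two_pow_le (hmono : ∀ n ≥ 1, a (n + 1) ≤ a n) (t N : ℕ) :
    ∑ j ∈ Finset.Ico (2 ^ t) (2 ^ (t + N)), a j ≤
      2 ^ t * ∑ k ∈ Finset.range N, 2 ^ k * a (2 ^ (t + k)) := by
  have hanti := antitoneOn_nat_Ici_of_succ_le hmono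
  have := Finset.le_sum_schlomilch' (f := a) (u := fun k => 2 ^ (t + k))
    (fun p q hp hpq => hanti hp (hp.trans_le hpq) hpq) (fun _ => by positivity)
    (fun p q hpq => Nat.pow_le_pow_right two_pos (by omega)) N
  rw [add_zero] at this
  refine this.trans_eq ?_
  rw [Finset.mul_sum]
  refine Finset.sum_congr rfl fun k _ => ?_
  rw [nsmul_eq_mul, ← add_assoc, pow_succ, mul_two, Nat.add_sub_cancel, pow_add]
  push_cast
  ring

lemma two_pow_mul_le_clen_summand (hmono : ∀ n ≥ 1, a (n + 1) ≤ a n) {t m : ℕ} (hm : 1 ≤ m)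
    (hmt : m < 2 ^ t) (k : ℕ) :
    2 ^ k * a (2 ^ (t + k)) ≤ ∑ i ∈ Finset.range (2 ^ k), a (2 ^ k * m + i) := by
  have hanti := antitoneOn_nat_Ici_of_succ_le hmono
  calc (2 : ℝ) ^ k * a (2 ^ (t + k)) = ∑ _i ∈ Finset.range (2 ^ k), a (2 ^ (t + k)) := by simp
    _ ≤ _ := Finset.sum_le_sum fun i hi => hanti ?_ Nat.one_le_two_pow ?_
  · exact le_add_right (Nat.one_le_iff_ne_zero.2 (by positivity))
  · have : 2 ^ k * (m + 1) ≤ 2 ^ k * 2 ^ t := Nat.mul_le_mul_left _ hmt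
    rw [Finset.mem_range] at hi
    rw [pow_add]
    nlinarith

lemma le_two_pow_add_sub_two_pow (t N : ℕ) : N ≤ 2 ^ (t + N) - 2 ^ t := by
  have h1 : 2 ^ t * N + 2 ^ t ≤ 2 ^ t * 2 ^ N := by
    rw [← mul_add_one]; exact Nat.mul_le_mul_left _ Nat.lt_two_pow_self
  have h2 : N ≤ 2 ^ t * N := Nat.le_mul_of_pos_left N (by positivity)
  rw [pow_add]
  omega

/-- Condensation against the `k`-th summand of `clen a m`, each of whose `2^k` terms is at least
`a_(2^(t+k))` when `m < 2^t`. -/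
lemma sseq_le_clen (hpos : ∀ n ≥ 1, 0 < a n) (hmono : ∀ n ≥ 1, a (n + 1) ≤ a n)
    (hsumm : Summable fun n => a (n + 1)) {t m : ℕ} (hm : 1 ≤ m) (hmt : m < 2 ^ t) :
    sseq a t ≤ clen a m := by
  rw [sseq, div_le_iff₀ (by positivity), mul_comm]
  refine (summable_add_left hsumm Nat.one_le_two_pow).tsum_le_of_sum_range_le fun N => ?_
  calc ∑ i ∈ Finset.range N, a (2 ^ t + i)
      ≤ ∑ j ∈ Finset.Ico (2 ^ t) (2 ^ (t + N)), a j := by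
        rw [Finset.sum_Ico_eq_sum_range]
        exact Finset.sum_le_sum_of_subset_of_nonneg
          (Finset.range_subset_range.2 (le_two_pow_add_sub_two_pow t N))
          fun i _ _ => (hpos _ (le_add_right Nat.one_le_two_pow)).le
    _ ≤ 2 ^ t * ∑ k ∈ Finset.range N, 2 ^ k * a (2 ^ (t + k)) := sum_Ico_two_pow_le hmono t N
    _ ≤ 2 ^ t * clen a m := by
        gcongr
        exact (Finset.sum_le_sum fun k _ => two_pow_mul_le_clen_summand hmono hm hmt k).trans
          ((clen_summable hpos hsumm hm).sum_le_tsum _ fun k _ => clen_summand_nonneg hpos hm k)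

end IntervalLength

section Nodes

variable {a : ℕ → ℝ}

lemma lft_two_mul {m : ℕ} (hm : 1 ≤ m) : lft a (2 * m) = lft a m := by
  obtain ⟨n, hn⟩ : ∃ n, 2 * m = n + 2 := ⟨2 * m - 2, by omega⟩
  rw [hn, lft, if_pos (by omega), show (n + 2) / 2 = m by omega]

lemma lft_two_mul_add_one {m : ℕ} (hm : 1 ≤ m) :
    lft a (2 * m + 1) = lft a m + clen a (2 * m) + a m := by
  obtain ⟨n, hn⟩ : ∃ n, 2 * m + 1 = n + 2 := ⟨2 * m - 1, by omega⟩
  rw [hn, lft, if_neg (by omega), show (n + 2) / 2 = m by omega, show n + 1 = 2 * m by omega]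

lemma lft_mul_two_pow {m : ℕ} (hm : 1 ≤ m) (d : ℕ) : lft a (m * 2 ^ d) = lft a m := by
  induction d with
  | zero => simp
  | succ d ih =>
    rw [pow_succ, ← mul_assoc, mul_comm _ 2, lft_two_mul (Nat.mul_le_mul hm Nat.one_le_two_pow), ih]

lemma lft_mem_node (hpos : ∀ n ≥ 1, 0 < a n) {m : ℕ} (hm : 1 ≤ m) : lft a m ∈ node a m :=
  ⟨le_rfl, le_add_of_nonneg_right (clen_nonneg hpos hm)⟩

lemma node_subset_node_div_two (hpos : ∀ n ≥ 1, 0 < a n) (hsumm : Summable fun n => a (n + 1))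
    {m : ℕ} (hm : 2 ≤ m) : node a m ⊆ node a (m / 2) := by
  have hm2 : 1 ≤ m / 2 := by omega
  have hlen := clen_eq_add hpos hsumm hm2
  have hgap := (hpos _ hm2).le
  rcases Nat.even_or_odd' m with ⟨q, rfl | rfl⟩
  · have h := clen_nonneg hpos (show 1 ≤ 2 * q + 1 by omega)
    rw [show 2 * q / 2 = q by omega] at hlen hgap ⊢
    rw [node, node, lft_two_mul (by omega)]
    exact Set.Icc_subset_Icc le_rfl (by linarith)
  · have h := clen_nonneg hpos (show 1 ≤ 2 * q by omega)
    rw [show (2 * q + 1) / 2 = q by omega] at hlen hgap ⊢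
    rw [node, node, lft_two_mul_add_one (by omega)]
    exact Set.Icc_subset_Icc (by linarith) (by linarith)

lemma node_subset_node_div_two_pow (hpos : ∀ n ≥ 1, 0 < a n)
    (hsumm : Summable fun n => a (n + 1)) (d : ℕ) {m : ℕ} (hm : 2 ^ d ≤ m) :
    node a m ⊆ node a (m / 2 ^ d) := by
  induction d generalizing m with
  | zero => simp
  | succ d ih =>
    rw [pow_succ'] at hm ⊢
    rw [← Nat.div_div_eq_div_mul]
    refine (node_subset_node_div_two hpos hsumm ?_).trans (ih ?_)
    · linarith [Nat.one_le_two_pow (n := d)]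
    · exact (Nat.le_div_iff_mul_le two_pos).2 (by linarith)

lemma lft_mem_cantorSetOf (hpos : ∀ n ≥ 1, 0 < a n) (hsumm : Summable fun n => a (n + 1))
    {T m : ℕ} (hm : m ∈ Finset.Ico (2 ^ T) (2 ^ (T + 1))) : lft a m ∈ cantorSetOf a := by
  rw [Finset.mem_Ico] at hm
  have hm1 : 1 ≤ m := Nat.one_le_two_pow.trans hm.1
  refine Set.mem_iInter.2 fun n => Set.mem_iUnion₂.2 ?_
  -- `m * 2^n / 2^T` is the level-`n` ancestor of the level-`(T + n)` node `m * 2^n`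
  set q := m * 2 ^ n / 2 ^ T
  have hq : 2 ^ n ≤ q ∧ q < 2 ^ (n + 1) := by
    constructor
    · rw [Nat.le_div_iff_mul_le (by positivity), mul_comm]
      exact Nat.mul_le_mul_right _ hm.1
    · rw [Nat.div_lt_iff_lt_mul (by positivity)]
      calc m * 2 ^ n < 2 ^ (T + 1) * 2 ^ n := Nat.mul_lt_mul_of_pos_right hm.2 (by positivity)
        _ = 2 ^ (n + 1) * 2 ^ T := by ring
  refine ⟨q - 2 ^ n + 1, Finset.mem_Icc.2 ⟨by omega, by omega⟩, ?_⟩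
  rw [show 2 ^ n + (q - 2 ^ n + 1) - 1 = q by omega, ← lft_mul_two_pow hm1 n]
  exact node_subset_node_div_two_pow hpos hsumm T
    (hm.1.trans (Nat.le_mul_of_pos_right m (by positivity)))
    (lft_mem_node hpos (Nat.mul_le_mul hm1 Nat.one_le_two_pow))

lemma lft_add_clen_lt_lft_succ (hpos : ∀ n ≥ 1, 0 < a n) (hsumm : Summable fun n => a (n + 1))
    (n : ℕ) {j : ℕ} (hj : 2 ^ n ≤ j) (hj' : j + 1 < 2 ^ (n + 1)) :
    lft a j + clen a j < lft a (j + 1) := by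
  induction n generalizing j with
  | zero => omega
  | succ n ih =>
    rw [pow_succ'] at hj
    rw [pow_succ'] at hj'
    rcases Nat.even_or_odd' j with ⟨m, rfl | rfl⟩
    · have hm : 1 ≤ m := (Nat.one_le_two_pow (n := n)).trans (by omega)
      rw [lft_two_mul hm, lft_two_mul_add_one hm]
      linarith [hpos m hm]
    · have hm : 1 ≤ m := (Nat.one_le_two_pow (n := n)).trans (by omega)
      have := ih (j := m) (by omega) (by omega)
      rw [show 2 * m + 1 + 1 = 2 * (m + 1) by ring, lft_two_mul (by omega),
        lft_two_mul_add_one hm]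
      linarith [clen_eq_add hpos hsumm hm]

lemma lft_add_clen_lt_lft (hpos : ∀ n ≥ 1, 0 < a n) (hsumm : Summable fun n => a (n + 1))
    (n : ℕ) {j j' : ℕ} (hj : 2 ^ n ≤ j) (hjj' : j < j') (hj' : j' < 2 ^ (n + 1)) :
    lft a j + clen a j < lft a j' := by
  induction j', hjj' using Nat.le_induction with
  | base => exact lft_add_clen_lt_lft_succ hpos hsumm n hj hj'
  | succ j' hjj' ih =>
    have hj'' : 2 ^ n ≤ j' := by omega
    have := lft_add_clen_lt_lft_succ hpos hsumm n hj'' hj'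
    linarith [ih (by omega), clen_nonneg hpos (Nat.one_le_two_pow.trans hj'')]

end Nodes

open Classical in
noncomputable def nodesMeeting (a : ℕ → ℝ) (U : Set ℝ) (n : ℕ) : Finset ℕ :=
  (Finset.Ico (2 ^ n) (2 ^ (n + 1))).filter fun m => (U ∩ node a m).Nonempty

section Counting

variable {a : ℕ → ℝ}

lemma mem_nodesMeeting {U : Set ℝ} {n m : ℕ} :
    m ∈ nodesMeeting a U n ↔ m ∈ Finset.Ico (2 ^ n) (2 ^ (n + 1)) ∧ (U ∩ node a m).Nonempty := by
  classical
  simp only [nodesMeeting, Finset.mem_filter]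

/-- Two level-`n` intervals that are not adjacent are separated by a whole level-`n`
interval, which is longer than `s_(n+1)`. -/
lemma le_succ_of_mem_nodesMeeting (hpos : ∀ n ≥ 1, 0 < a n) (hmono : ∀ n ≥ 1, a (n + 1) ≤ a n)
    (hsumm : Summable fun n => a (n + 1)) {U : Set ℝ} (hU : Bornology.IsBounded U) {n : ℕ}
    (hdiam : Metric.diam U ≤ sseq a (n + 1)) {j j' : ℕ} (hj : j ∈ nodesMeeting a U n)
    (hj' : j' ∈ nodesMeeting a U n) : j' ≤ j + 1 := by
  rw [mem_nodesMeeting, Finset.mem_Ico] at hj hj'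
  obtain ⟨⟨hj₁, -⟩, p, hpU, hp⟩ := hj
  obtain ⟨⟨-, hj'₂⟩, q, hqU, hq⟩ := hj'
  by_contra h
  have hleft := lft_add_clen_lt_lft hpos hsumm n hj₁ (j' := j + 1) (by omega) (by omega)
  have hright := lft_add_clen_lt_lft hpos hsumm n (j := j + 1) (by omega) (by omega) hj'₂
  have hlong := sseq_le_clen hpos hmono hsumm (t := n + 1) (m := j + 1) (by omega) (by omega)
  have hpq := (le_abs_self (q - p)).trans ((Metric.dist_le_diam_of_mem hU hqU hpU).trans hdiam)
  linarith [hp.2, hq.1]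

lemma card_nodesMeeting_le_two (hpos : ∀ n ≥ 1, 0 < a n) (hmono : ∀ n ≥ 1, a (n + 1) ≤ a n)
    (hsumm : Summable fun n => a (n + 1)) {U : Set ℝ} (hU : Bornology.IsBounded U) {n : ℕ}
    (hdiam : Metric.diam U ≤ sseq a (n + 1)) : (nodesMeeting a U n).card ≤ 2 := by
  rcases (nodesMeeting a U n).eq_empty_or_nonempty with h | h
  · simp [h]
  · set j := (nodesMeeting a U n).min' h
    have hsub : nodesMeeting a U n ⊆ Finset.Icc j (j + 1) := fun j' hj' =>
      Finset.mem_Icc.2 ⟨Finset.min'_le _ _ hj',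
        le_succ_of_mem_nodesMeeting hpos hmono hsumm hU hdiam (Finset.min'_mem _ h) hj'⟩
    simpa [Nat.card_Icc, add_assoc] using Finset.card_le_card hsub

lemma div_two_pow_mem_nodesMeeting (hpos : ∀ n ≥ 1, 0 < a n)
    (hsumm : Summable fun n => a (n + 1)) {U : Set ℝ} {n d m : ℕ}
    (hm : m ∈ nodesMeeting a U (n + d)) : m / 2 ^ d ∈ nodesMeeting a U n := by
  rw [mem_nodesMeeting, Finset.mem_Ico] at hm ⊢
  obtain ⟨⟨hm₁, hm₂⟩, x, hxU, hx⟩ := hm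
  refine ⟨⟨?_, ?_⟩, x, hxU, node_subset_node_div_two_pow hpos hsumm d ?_ hx⟩
  · rw [Nat.le_div_iff_mul_le (by positivity), ← pow_add]; exact hm₁
  · rw [Nat.div_lt_iff_lt_mul (by positivity), ← pow_add, add_right_comm]; exact hm₂
  · exact (Nat.pow_le_pow_right two_pos (by omega)).trans hm₁

lemma card_nodesMeeting_le (hpos : ∀ n ≥ 1, 0 < a n) (hmono : ∀ n ≥ 1, a (n + 1) ≤ a n)
    (hsumm : Summable fun n => a (n + 1)) {U : Set ℝ} (hU : Bornology.IsBounded U) {n : ℕ}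
    (hdiam : Metric.diam U ≤ sseq a (n + 1)) (d : ℕ) :
    (nodesMeeting a U (n + d)).card ≤ 2 ^ d * 2 := by
  classical
  have hfiber : ∀ b ∈ (nodesMeeting a U (n + d)).image (· / 2 ^ d),
      ((nodesMeeting a U (n + d)).filter fun m => m / 2 ^ d = b).card ≤ 2 ^ d := by
    intro b _
    calc _ ≤ (Finset.Ico (b * 2 ^ d) (b * 2 ^ d + 2 ^ d)).card := by
          refine Finset.card_le_card fun m hm => ?_
          rw [Finset.mem_filter] at hm
          rw [Finset.mem_Ico, ← hm.2, ← add_one_mul]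
          exact ⟨Nat.div_mul_le_self m _,
            mul_comm (2 ^ d) _ ▸ Nat.lt_mul_div_succ m (by positivity)⟩
      _ = 2 ^ d := by simp
  have himage : (nodesMeeting a U (n + d)).image (· / 2 ^ d) ⊆ nodesMeeting a U n := by
    intro b hb
    obtain ⟨m, hm, rfl⟩ := Finset.mem_image.1 hb
    exact div_two_pow_mem_nodesMeeting hpos hsumm hm
  calc _ ≤ 2 ^ d * ((nodesMeeting a U (n + d)).image (· / 2 ^ d)).card :=
        Finset.card_le_mul_card_image _ _ hfiber
    _ ≤ 2 ^ d * 2 := Nat.mul_le_mul_left _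
        ((Finset.card_le_card himage).trans (card_nodesMeeting_le_two hpos hmono hsumm hU hdiam))

end Counting

section Covers

variable {a : ℕ → ℝ}

lemma two_pow_le_sum_card_nodesMeeting (hpos : ∀ n ≥ 1, 0 < a n)
    (hsumm : Summable fun n => a (n + 1)) {I : Finset ℕ} {U : ℕ → Set ℝ}
    (hcover : cantorSetOf a ⊆ ⋃ i ∈ I, U i) (T : ℕ) :
    2 ^ T ≤ ∑ i ∈ I, (nodesMeeting a (U i) T).card := by
  classical
  have hsub : Finset.Ico (2 ^ T) (2 ^ (T + 1)) ⊆ I.biUnion fun i => nodesMeeting a (U i) T := by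
    intro m hm
    obtain ⟨i, hi, hmi⟩ := Set.mem_iUnion₂.1 (hcover (lft_mem_cantorSetOf hpos hsumm hm))
    have hm1 : 1 ≤ m := Nat.one_le_two_pow.trans (Finset.mem_Ico.1 hm).1
    exact Finset.mem_biUnion.2 ⟨i, hi, mem_nodesMeeting.2 ⟨hm, lft a m, hmi, lft_mem_node hpos hm1⟩⟩
  calc 2 ^ T = (Finset.Ico (2 ^ T) (2 ^ (T + 1))).card := by simp [pow_succ, mul_two]
    _ ≤ _ := (Finset.card_le_card hsub).trans Finset.card_biUnion_le

/-- Mass distribution: give each level-`T` interval, `T = max t_i`, the mass `2^(-T)`. -/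
lemma one_div_four_le_sum_of_cantorSetOf_subset (hpos : ∀ n ≥ 1, 0 < a n)
    (hmono : ∀ n ≥ 1, a (n + 1) ≤ a n) (hsumm : Summable fun n => a (n + 1)) {I : Finset ℕ}
    {U : ℕ → Set ℝ} (hcover : cantorSetOf a ⊆ ⋃ i ∈ I, U i)
    (hU : ∀ i ∈ I, Bornology.IsBounded (U i)) {t : ℕ → ℕ}
    (ht : ∀ i ∈ I, Metric.diam (U i) ≤ sseq a (t i)) :
    1 / 4 ≤ ∑ i ∈ I, (1 / 2 : ℝ) ^ t i := by
  set T := I.sup t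
  have hcard : ∀ i ∈ I, ((nodesMeeting a (U i) T).card : ℝ) ≤ 4 * 2 ^ T * (1 / 2) ^ t i := by
    intro i hi
    have hle : t i ≤ T := Finset.le_sup hi
    rcases Nat.eq_zero_or_pos (t i) with h0 | hti
    · have : (nodesMeeting a (U i) T).card ≤ 2 ^ T :=
        (Finset.card_le_card fun m hm => (mem_nodesMeeting.1 hm).1).trans_eq
          (by simp [pow_succ, mul_two])
      rw [h0, pow_zero, mul_one]
      have : ((nodesMeeting a (U i) T).card : ℝ) ≤ 2 ^ T := by exact_mod_cast this
      linarith [pow_pos (two_pos : (0 : ℝ) < 2) T]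
    · obtain ⟨n, hn⟩ : ∃ n, t i = n + 1 := ⟨t i - 1, by omega⟩
      obtain ⟨d, hd⟩ : ∃ d, T = n + d := ⟨T - n, by omega⟩
      have := card_nodesMeeting_le hpos hmono hsumm (hU i hi) (hn ▸ ht i hi) d
      rw [hd, hn, show (4 : ℝ) * 2 ^ (n + d) * (1 / 2) ^ (n + 1) = 2 ^ d * 2 by
        rw [pow_add, one_div_pow, pow_succ]; field_simp; ring]
      exact_mod_cast this
  have hcount : (2 : ℝ) ^ T ≤ 4 * 2 ^ T * ∑ i ∈ I, (1 / 2 : ℝ) ^ t i := by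
    rw [Finset.mul_sum]
    exact le_trans (by exact_mod_cast two_pow_le_sum_card_nodesMeeting hpos hsumm hcover T)
      (Finset.sum_le_sum hcard)
  have h2T : (0 : ℝ) < 2 ^ T := by positivity
  rw [div_le_iff₀ (by norm_num : (0 : ℝ) < 4)]
  nlinarith

end Covers

theorem cover_cost_lower_bound_general (a : ℕ → ℝ) (hpos : ∀ n ≥ 1, 0 < a n) (hmono : ∀ n ≥ 1, a (n + 1) ≤ a n)
    (hsumm : Summable fun n => a (n + 1))
    (θ : ℝ) (k' ρk : ℕ)
    (hρmin : ∀ m ∈ Finset.Icc k' (gammaIdx a θ k' + 1),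
      sseq a ρk ^ (1 / (ρk : ℝ)) ≤ sseq a m ^ (1 / (m : ℝ)))
    (s' : ℝ) (hs' : 0 < s')
    (hlt : s' < (-(ρk : ℝ) * Real.log 2) / Real.log (sseq a ρk))
    (I : Finset ℕ) (U : ℕ → Set ℝ)
    (hcover : cantorSetOf a ⊆ ⋃ i ∈ I, U i)
    (hdiam : ∀ i ∈ I,
      sseq a k' ^ (1 / θ) ≤ Metric.diam (U i) ∧ Metric.diam (U i) ≤ sseq a k') :
    1 / 16 ≤ ∑ i ∈ I, Metric.diam (U i) ^ s' := by
  have hlevel : ∀ i ∈ I, ∃ t, k' ≤ t ∧ t ≤ gammaIdx a θ k' ∧ Metric.diam (U i) ≤ sseq a t ∧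
      sseq a (t + 1) ≤ Metric.diam (U i) := fun i hi =>
    exists_le_and_succ_le (le_gammaIdx hpos hsumm ((hdiam i hi).1.trans (hdiam i hi).2))
      (hdiam i hi).2 ((sseq_gammaIdx_succ_lt hpos hsumm θ k').le.trans (hdiam i hi).1)
  choose! t hk't htγ hdiam_le hle_diam using hlevel
  have hbdd : ∀ i ∈ I, Bornology.IsBounded (U i) := fun i hi => by
    by_contra h
    have := (Real.rpow_pos_of_pos (sseq_pos hpos hsumm k') (1 / θ)).trans_le (hdiam i hi).1
    exact this.ne' (Metric.diam_eq_zero_of_unbounded h)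
  have hterm : ∀ i ∈ I, (1 / 2 : ℝ) * (1 / 2) ^ t i ≤ Metric.diam (U i) ^ s' := fun i hi => by
    have hmin := hρmin (t i + 1)
      (Finset.mem_Icc.2 ⟨by linarith [hk't i hi], by linarith [htγ i hi]⟩)
    rw [← pow_succ']
    exact (half_pow_lt_rpow (sseq_pos hpos hsumm ρk) (sseq_pos hpos hsumm _) (t i).succ_ne_zero
      hs' hlt hmin).le.trans (Real.rpow_le_rpow (sseq_pos hpos hsumm _).le (hle_diam i hi) hs'.le)
  have hmass := one_div_four_le_sum_of_cantorSetOf_subset hpos hmono hsumm hcover hbdd hdiam_le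
  calc (1 / 16 : ℝ) ≤ 1 / 2 * ∑ i ∈ I, (1 / 2 : ℝ) ^ t i := by linarith
    _ ≤ _ := by rw [Finset.mul_sum]; exact Finset.sum_le_sum hterm

/-- If `s' < (-ρ(k') log 2)/(log s_{ρ(k')})` with `ρ(k')` the minimizer of `s_m^{1/m}`
over `m ∈ [k', γ_θ(k') + 1]`, then every finite cover of `C_a` by sets of diameters in
`[s_{k'}^{1/θ}, s_{k'}]` has `s'`-cost at least `1/16`. -/
theorem cover_cost_lower_bound (a : ℕ → ℝ) (hpos : ∀ n ≥ 1, 0 < a n) (hmono : ∀ n ≥ 1, a (n + 1) ≤ a n)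
    (hsumm : Summable fun n => a (n + 1)) (htot : ∑' n : ℕ, a (n + 1) = 1)
    (θ : ℝ) (hθ : θ ∈ Set.Ioc (0:ℝ) 1) (k' ρk : ℕ)
    (hρmem : ρk ∈ Finset.Icc k' (gammaIdx a θ k' + 1))
    (hρmin : ∀ m ∈ Finset.Icc k' (gammaIdx a θ k' + 1),
      sseq a ρk ^ (1 / (ρk : ℝ)) ≤ sseq a m ^ (1 / (m : ℝ)))
    (s' : ℝ) (hs' : 0 < s')
    (hlt : s' < (-(ρk : ℝ) * Real.log 2) / Real.log (sseq a ρk))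
    (I : Finset ℕ) (U : ℕ → Set ℝ)
    (hcover : cantorSetOf a ⊆ ⋃ i ∈ I, U i)
    (hdiam : ∀ i ∈ I,
      sseq a k' ^ (1 / θ) ≤ Metric.diam (U i) ∧ Metric.diam (U i) ≤ sseq a k') :
    1 / 16 ≤ ∑ i ∈ I, Metric.diam (U i) ^ s' :=
  cover_cost_lower_bound_general a hpos hmono hsumm θ k' ρk hρmin s' hs' hlt I U hcover hdiam
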